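/- arXiv:1212.0108 — 3 statements merged into one kernel-verified Lean document; each statement's English description precedes it below -/
import Mathlib

section
/- (Corollary 14 of the paper, adequacy for the propositional/quantifier-free fragment) Let L be a relational vocabulary, let 𝔄 and 𝔅 be classes of L-structures with assignments, and let α be a countable ordinal with α ≥ 1. Let WinI^QF(𝔄,𝔅,γ) be defined exactly like WinI(𝔄,𝔅,γ) but with only the clauses (i)–(v) (splitting moves) and without the supplementing clauses (vi)–(vii). Then WinI^QF(𝔄,𝔅,α) holds if and only if there is a quantifier-free L_{ω1ω}-formula φ (a formula containing no quantifiers ∃x_n or ∀x_n) with s(φ) ≤ α such that (𝔄,𝔅) ⊨ φ. -/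
structure Vocab where
  Rel : Type
  arity : Rel → ℕ

structure Struc (L : Vocab) where
  Dom : Type
  nonempty : Nonempty Dom
  rel : (R : L.Rel) → (Fin (L.arity R) → Dom) → Prop

/-- `L_{ω₁ω}`-formulas in negation normal form. -/
inductive Fml (L : Vocab) : Type
  | eq : ℕ → ℕ → Fml L
  | neq : ℕ → ℕ → Fml L
  | rel : (R : L.Rel) → (Fin (L.arity R) → ℕ) → Fml L
  | nrel : (R : L.Rel) → (Fin (L.arity R) → ℕ) → Fml L
  | and : Fml L → Fml L → Fml L
  | or : Fml L → Fml L → Fml L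
  | iand : (ℕ → Fml L) → Fml L
  | ior : (ℕ → Fml L) → Fml L
  | ex : ℕ → Fml L → Fml L
  | all : ℕ → Fml L → Fml L

def Sat {L : Vocab} (A : Struc L) (v : ℕ → A.Dom) : Fml L → Prop
  | .eq i j => v i = v j
  | .neq i j => v i ≠ v j
  | .rel R ts => A.rel R (fun k => v (ts k))
  | .nrel R ts => ¬ A.rel R (fun k => v (ts k))
  | .and φ ψ => Sat A v φ ∧ Sat A v ψ
  | .or φ ψ => Sat A v φ ∨ Sat A v ψ
  | .iand f => ∀ i : ℕ, Sat A v (f i)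
  | .ior f => ∃ i : ℕ, Sat A v (f i)
  | .ex n φ => ∃ a : A.Dom, Sat A (Function.update v n a) φ
  | .all n φ => ∀ a : A.Dom, Sat A (Function.update v n a) φ

universe u

/-- Natural (Hessenberg) addition of ordinals, as formerly defined in Mathlib
(`Ordinal.nadd`, removed since). -/
noncomputable def Ordinal.nadd (a b : Ordinal.{u}) : Ordinal.{u} :=
  max (⨆ x : Set.Iio a, Order.succ (Ordinal.nadd x.1 b))
    (⨆ x : Set.Iio b, Order.succ (Ordinal.nadd a x.1))
termination_by (a, b)
decreasing_by all_goals cases x; decreasing_tactic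

/-- Finite partial natural (Hessenberg) sums. -/
noncomputable def natSumPrefix (γ : ℕ → Ordinal) : ℕ → Ordinal
  | 0 => 0
  | n + 1 => Ordinal.nadd (natSumPrefix γ n) (γ n)

/-- The infinite natural sum. -/
noncomputable def inatSum (γ : ℕ → Ordinal) : Ordinal := ⨆ n : ℕ, natSumPrefix γ n

noncomputable def size {L : Vocab} : Fml L → Ordinal
  | .eq _ _ => 1
  | .neq _ _ => 1
  | .rel _ _ => 1
  | .nrel _ _ => 1
  | .and φ ψ => Ordinal.nadd (size φ) (size ψ)
  | .or φ ψ => Ordinal.nadd (size φ) (size ψ)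
  | .iand f => inatSum (fun i => size (f i))
  | .ior f => inatSum (fun i => size (f i))
  | .ex _ φ => size φ + 1
  | .all _ φ => size φ + 1

abbrev StrucAsn (L : Vocab) := Σ A : Struc L, (ℕ → A.Dom)

def Separates {L : Vocab} (φ : Fml L) (𝔄 𝔅 : Set (StrucAsn L)) : Prop :=
  (∀ p ∈ 𝔄, Sat p.1 p.2 φ) ∧ (∀ p ∈ 𝔅, ¬ Sat p.1 p.2 φ)

inductive IsBasic {L : Vocab} : Fml L → Prop
  | eq (i j : ℕ) : IsBasic (.eq i j)
  | neq (i j : ℕ) : IsBasic (.neq i j)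
  | rel (R) (ts) : IsBasic (.rel R ts)
  | nrel (R) (ts) : IsBasic (.nrel R ts)


/-- Quantifier-free `L_{ω₁ω}`-formulas. -/
inductive IsQF {L : Vocab} : Fml L → Prop
  | eq (i j : ℕ) : IsQF (.eq i j)
  | neq (i j : ℕ) : IsQF (.neq i j)
  | rel (R) (ts) : IsQF (.rel R ts)
  | nrel (R) (ts) : IsQF (.nrel R ts)
  | and {φ ψ : Fml L} : IsQF φ → IsQF ψ → IsQF (.and φ ψ)
  | or {φ ψ : Fml L} : IsQF φ → IsQF ψ → IsQF (.or φ ψ)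
  | iand {f : ℕ → Fml L} : (∀ i, IsQF (f i)) → IsQF (.iand f)
  | ior {f : ℕ → Fml L} : (∀ i, IsQF (f i)) → IsQF (.ior f)

/-- Player I has a winning strategy in the quantifier-free (propositional) game
`EFB^P_γ(𝔄, 𝔅)`: only the splitting moves (i)–(v) are allowed. -/
inductive WinIQF {L : Vocab} : Set (StrucAsn L) → Set (StrucAsn L) → Ordinal → Prop
  | basic {𝔄 𝔅 : Set (StrucAsn L)} {γ : Ordinal} (φ : Fml L) :
      IsBasic φ → Separates φ 𝔄 𝔅 → WinIQF 𝔄 𝔅 γ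
  | splitL {𝔄 𝔅 : Set (StrucAsn L)} {γ : Ordinal} (𝔄₁ 𝔄₂ : Set (StrucAsn L))
      (γ₁ γ₂ : Ordinal) : 𝔄 = 𝔄₁ ∪ 𝔄₂ → γ₁ ≠ 0 → γ₂ ≠ 0 → Ordinal.nadd γ₁ γ₂ ≤ γ →
      WinIQF 𝔄₁ 𝔅 γ₁ → WinIQF 𝔄₂ 𝔅 γ₂ → WinIQF 𝔄 𝔅 γ
  | splitR {𝔄 𝔅 : Set (StrucAsn L)} {γ : Ordinal} (𝔅₁ 𝔅₂ : Set (StrucAsn L))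
      (γ₁ γ₂ : Ordinal) : 𝔅 = 𝔅₁ ∪ 𝔅₂ → γ₁ ≠ 0 → γ₂ ≠ 0 → Ordinal.nadd γ₁ γ₂ ≤ γ →
      WinIQF 𝔄 𝔅₁ γ₁ → WinIQF 𝔄 𝔅₂ γ₂ → WinIQF 𝔄 𝔅 γ
  | isplitL {𝔄 𝔅 : Set (StrucAsn L)} {γ : Ordinal} (𝔄s : ℕ → Set (StrucAsn L))
      (γs : ℕ → Ordinal) : 𝔄 = ⋃ i, 𝔄s i → (∀ i, γs i ≠ 0) → inatSum γs ≤ γ →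
      (∀ i, WinIQF (𝔄s i) 𝔅 (γs i)) → WinIQF 𝔄 𝔅 γ
  | isplitR {𝔄 𝔅 : Set (StrucAsn L)} {γ : Ordinal} (𝔅s : ℕ → Set (StrucAsn L))
      (γs : ℕ → Ordinal) : 𝔅 = ⋃ i, 𝔅s i → (∀ i, γs i ≠ 0) → inatSum γs ≤ γ →
      (∀ i, WinIQF 𝔄 (𝔅s i) (γs i)) → WinIQF 𝔄 𝔅 γ

/-!
The splitting moves of the propositional game are the connectives read backwards: splitting
`𝔄` is a disjunction, splitting `𝔅` a conjunction, and a basic position is an atomic or negated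
atomic formula. Budgets split exactly as sizes do, so a winning strategy with budget `γ` is a
quantifier-free separating formula of size `≤ γ`, and conversely.
-/

namespace Ordinal

theorem nadd_lt_nadd_right {a b : Ordinal.{u}} (h : a < b) (c : Ordinal.{u}) :
    nadd a c < nadd b c := by
  rw [nadd.eq_1 b c]
  refine (Order.lt_succ _).trans_le (le_max_of_le_left ?_)
  exact Ordinal.le_iSup (fun x : Set.Iio b => Order.succ (nadd x.1 c)) ⟨a, h⟩

theorem nadd_lt_nadd_left {a b : Ordinal.{u}} (h : a < b) (c : Ordinal.{u}) :
    nadd c a < nadd c b := by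
  rw [nadd.eq_1 c b]
  refine (Order.lt_succ _).trans_le (le_max_of_le_right ?_)
  exact Ordinal.le_iSup (fun x : Set.Iio b => Order.succ (nadd c x.1)) ⟨a, h⟩

theorem nadd_le_nadd {a b c d : Ordinal.{u}} (hab : a ≤ b) (hcd : c ≤ d) :
    nadd a c ≤ nadd b d :=
  calc nadd a c ≤ nadd a d := (StrictMono.monotone fun _ _ h => nadd_lt_nadd_left h a) hcd
    _ ≤ nadd b d := (StrictMono.monotone fun _ _ h => nadd_lt_nadd_right h d) hab

theorem le_self_nadd (a b : Ordinal.{u}) : a ≤ nadd a b :=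
  StrictMono.le_apply (f := (nadd · b)) fun _ _ h => nadd_lt_nadd_right h b

theorem le_nadd_self (a b : Ordinal.{u}) : a ≤ nadd b a :=
  StrictMono.le_apply (f := nadd b) fun _ _ h => nadd_lt_nadd_left h b

end Ordinal

theorem natSumPrefix_mono {γ δ : ℕ → Ordinal} (h : ∀ i, γ i ≤ δ i) (n : ℕ) :
    natSumPrefix γ n ≤ natSumPrefix δ n := by
  induction n with
  | zero => exact le_rfl
  | succ n ih => exact Ordinal.nadd_le_nadd ih (h n)

theorem inatSum_mono {γ δ : ℕ → Ordinal} (h : ∀ i, γ i ≤ δ i) : inatSum γ ≤ inatSum δ :=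
  ciSup_le fun n => (natSumPrefix_mono h n).trans (le_ciSup Ordinal.bddAbove_of_small n)

theorem le_inatSum (γ : ℕ → Ordinal) (i : ℕ) : γ i ≤ inatSum γ :=
  (Ordinal.le_nadd_self (γ i) (natSumPrefix γ i)).trans
    (le_ciSup Ordinal.bddAbove_of_small (i + 1))

theorem one_le_size {L : Vocab} (φ : Fml L) : 1 ≤ size φ := by
  induction φ with
  | eq | neq | rel | nrel => exact le_rfl
  | and φ ψ ihφ | or φ ψ ihφ => exact ihφ.trans (Ordinal.le_self_nadd _ _)
  | iand f ih | ior f ih => exact (ih 0).trans (le_inatSum _ 0)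
  | ex n φ ih | all n φ ih => exact ih.trans le_self_add

theorem size_ne_zero {L : Vocab} (φ : Fml L) : size φ ≠ 0 :=
  Order.one_le_iff_ne_zero.mp (one_le_size φ)

theorem IsBasic.isQF {L : Vocab} {φ : Fml L} (h : IsBasic φ) : IsQF φ := by
  cases h <;> constructor

theorem IsBasic.size_eq_one {L : Vocab} {φ : Fml L} (h : IsBasic φ) : size φ = 1 := by
  cases h <;> rfl

section Separates

variable {L : Vocab} {φ ψ : Fml L} {𝔄 𝔅 : Set (StrucAsn L)}

theorem Separates.or {𝔄₁ 𝔄₂ : Set (StrucAsn L)} (h₁ : Separates φ 𝔄₁ 𝔅)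
    (h₂ : Separates ψ 𝔄₂ 𝔅) : Separates (.or φ ψ) (𝔄₁ ∪ 𝔄₂) 𝔅 :=
  ⟨fun p hp => hp.imp (h₁.1 p) (h₂.1 p), fun p hp hs => hs.elim (h₁.2 p hp) (h₂.2 p hp)⟩

theorem Separates.and {𝔅₁ 𝔅₂ : Set (StrucAsn L)} (h₁ : Separates φ 𝔄 𝔅₁)
    (h₂ : Separates ψ 𝔄 𝔅₂) : Separates (.and φ ψ) 𝔄 (𝔅₁ ∪ 𝔅₂) :=
  ⟨fun p hp => ⟨h₁.1 p hp, h₂.1 p hp⟩,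
    fun p hp hs => hp.elim (fun hp => h₁.2 p hp hs.1) (fun hp => h₂.2 p hp hs.2)⟩

theorem Separates.ior {f : ℕ → Fml L} {𝔄s : ℕ → Set (StrucAsn L)}
    (h : ∀ i, Separates (f i) (𝔄s i) 𝔅) : Separates (.ior f) (⋃ i, 𝔄s i) 𝔅 :=
  ⟨fun p hp => (Set.mem_iUnion.mp hp).imp fun i hi => (h i).1 p hi,
    fun p hp ⟨i, hs⟩ => (h i).2 p hp hs⟩

theorem Separates.iand {f : ℕ → Fml L} {𝔅s : ℕ → Set (StrucAsn L)}
    (h : ∀ i, Separates (f i) 𝔄 (𝔅s i)) : Separates (.iand f) 𝔄 (⋃ i, 𝔅s i) :=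
  ⟨fun p hp i => (h i).1 p hp,
    fun p hp hs => (Set.mem_iUnion.mp hp).elim fun i hi => (h i).2 p hi (hs i)⟩

theorem Separates.eq_union_of_or (h : Separates (.or φ ψ) 𝔄 𝔅) :
    𝔄 = {p ∈ 𝔄 | Sat p.1 p.2 φ} ∪ {p ∈ 𝔄 | Sat p.1 p.2 ψ} :=
  (Set.sep_eq_self_iff_mem_true.mpr h.1).symm.trans Set.sep_or

theorem Separates.eq_union_of_and (h : Separates (.and φ ψ) 𝔄 𝔅) :
    𝔅 = {p ∈ 𝔅 | ¬ Sat p.1 p.2 φ} ∪ {p ∈ 𝔅 | ¬ Sat p.1 p.2 ψ} :=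
  (Set.sep_eq_self_iff_mem_true.mpr fun p hp => not_and_or.mp (h.2 p hp)).symm.trans Set.sep_or

theorem Separates.eq_iUnion_of_ior {f : ℕ → Fml L} (h : Separates (.ior f) 𝔄 𝔅) :
    𝔄 = ⋃ i, {p ∈ 𝔄 | Sat p.1 p.2 (f i)} := by
  ext p
  simp only [Set.mem_iUnion, Set.mem_sep_iff, exists_and_left]
  exact ⟨fun hp => ⟨hp, h.1 p hp⟩, And.left⟩

theorem Separates.eq_iUnion_of_iand {f : ℕ → Fml L} (h : Separates (.iand f) 𝔄 𝔅) :
    𝔅 = ⋃ i, {p ∈ 𝔅 | ¬ Sat p.1 p.2 (f i)} := by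
  ext p
  simp only [Set.mem_iUnion, Set.mem_sep_iff, exists_and_left]
  exact ⟨fun hp => ⟨hp, not_forall.mp (h.2 p hp)⟩, And.left⟩

end Separates

namespace WinIQF

variable {L : Vocab} {𝔄 𝔅 : Set (StrucAsn L)}

theorem mono {γ γ' : Ordinal} (h : WinIQF 𝔄 𝔅 γ) (hle : γ ≤ γ') : WinIQF 𝔄 𝔅 γ' := by
  cases h with
  | basic φ hb hs => exact .basic φ hb hs
  | splitL 𝔄₁ 𝔄₂ γ₁ γ₂ hu h₁ h₂ hsum w₁ w₂ =>
    exact .splitL 𝔄₁ 𝔄₂ γ₁ γ₂ hu h₁ h₂ (hsum.trans hle) w₁ w₂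
  | splitR 𝔅₁ 𝔅₂ γ₁ γ₂ hu h₁ h₂ hsum w₁ w₂ =>
    exact .splitR 𝔅₁ 𝔅₂ γ₁ γ₂ hu h₁ h₂ (hsum.trans hle) w₁ w₂
  | isplitL 𝔄s γs hu hnz hsum w => exact .isplitL 𝔄s γs hu hnz (hsum.trans hle) w
  | isplitR 𝔅s γs hu hnz hsum w => exact .isplitR 𝔅s γs hu hnz (hsum.trans hle) w

theorem of_separates {φ : Fml L} (hφ : IsQF φ) (h : Separates φ 𝔄 𝔅) :
    WinIQF 𝔄 𝔅 (size φ) := by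
  induction hφ generalizing 𝔄 𝔅 with
  | eq i j => exact .basic _ (.eq i j) h
  | neq i j => exact .basic _ (.neq i j) h
  | rel R ts => exact .basic _ (.rel R ts) h
  | nrel R ts => exact .basic _ (.nrel R ts) h
  | @and φ ψ _ _ ihφ ihψ =>
    exact .splitR _ _ (size φ) (size ψ) h.eq_union_of_and (size_ne_zero φ) (size_ne_zero ψ)
      le_rfl
      (ihφ ⟨fun p hp => (h.1 p hp).1, fun p hp => hp.2⟩)
      (ihψ ⟨fun p hp => (h.1 p hp).2, fun p hp => hp.2⟩)
  | @or φ ψ _ _ ihφ ihψ =>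
    exact .splitL _ _ (size φ) (size ψ) h.eq_union_of_or (size_ne_zero φ) (size_ne_zero ψ)
      le_rfl
      (ihφ ⟨fun p hp => hp.2, fun p hp hs => h.2 p hp (Or.inl hs)⟩)
      (ihψ ⟨fun p hp => hp.2, fun p hp hs => h.2 p hp (Or.inr hs)⟩)
  | @iand f _ ih =>
    exact .isplitR _ (fun i => size (f i)) h.eq_iUnion_of_iand (fun i => size_ne_zero (f i)) le_rfl
      fun i => ih i ⟨fun p hp => h.1 p hp i, fun p hp => hp.2⟩
  | @ior f _ ih =>
    exact .isplitL _ (fun i => size (f i)) h.eq_iUnion_of_ior (fun i => size_ne_zero (f i)) le_rfl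
      fun i => ih i ⟨fun p hp => hp.2, fun p hp hs => h.2 p hp ⟨i, hs⟩⟩

theorem exists_separates {γ : Ordinal} (h : WinIQF 𝔄 𝔅 γ) (hγ : γ ≠ 0) :
    ∃ φ : Fml L, IsQF φ ∧ size φ ≤ γ ∧ Separates φ 𝔄 𝔅 := by
  induction h with
  | basic φ hb hs =>
    exact ⟨φ, hb.isQF, hb.size_eq_one ▸ Order.one_le_iff_ne_zero.mpr hγ, hs⟩
  | splitL _ _ _ _ hu h₁ h₂ hsum _ _ ih₁ ih₂ =>
    obtain ⟨φ₁, hq₁, hs₁, hsep₁⟩ := ih₁ h₁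
    obtain ⟨φ₂, hq₂, hs₂, hsep₂⟩ := ih₂ h₂
    exact ⟨.or φ₁ φ₂, .or hq₁ hq₂, (Ordinal.nadd_le_nadd hs₁ hs₂).trans hsum,
      hu ▸ hsep₁.or hsep₂⟩
  | splitR _ _ _ _ hu h₁ h₂ hsum _ _ ih₁ ih₂ =>
    obtain ⟨φ₁, hq₁, hs₁, hsep₁⟩ := ih₁ h₁
    obtain ⟨φ₂, hq₂, hs₂, hsep₂⟩ := ih₂ h₂
    exact ⟨.and φ₁ φ₂, .and hq₁ hq₂, (Ordinal.nadd_le_nadd hs₁ hs₂).trans hsum,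
      hu ▸ hsep₁.and hsep₂⟩
  | isplitL _ _ hu hnz hsum _ ih =>
    choose φs hq hs hsep using fun i => ih i (hnz i)
    exact ⟨.ior φs, .ior hq, (inatSum_mono hs).trans hsum, hu ▸ Separates.ior hsep⟩
  | isplitR _ _ hu hnz hsum _ ih =>
    choose φs hq hs hsep using fun i => ih i (hnz i)
    exact ⟨.iand φs, .iand hq, (inatSum_mono hs).trans hsum, hu ▸ Separates.iand hsep⟩

end WinIQF

theorem adequacy_EFB_qf_general {L : Vocab} (𝔄 𝔅 : Set (StrucAsn L)) (α : Ordinal)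
    (hα : 1 ≤ α) :
    WinIQF 𝔄 𝔅 α ↔ ∃ φ : Fml L, IsQF φ ∧ size φ ≤ α ∧ Separates φ 𝔄 𝔅 :=
  ⟨fun h => h.exists_separates (Order.one_le_iff_ne_zero.mp hα),
    fun ⟨_, hφ, hsize, hsep⟩ => (WinIQF.of_separates hφ hsep).mono hsize⟩

theorem adequacy_EFB_qf {L : Vocab} (𝔄 𝔅 : Set (StrucAsn L)) (α : Ordinal)
    (hcount : α < (Cardinal.aleph 1).ord) (hα : 1 ≤ α) :
    WinIQF 𝔄 𝔅 α ↔ ∃ φ : Fml L, IsQF φ ∧ size φ ≤ α ∧ Separates φ 𝔄 𝔅 :=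
  adequacy_EFB_qf_general 𝔄 𝔅 α hα
end

section
/- (Corollary 6 of the paper) Let L be a relational vocabulary and A, B be L-structures. If Player II has a winning strategy in the game EFD_{ω₁}(A,B), i.e. WinII(∅,∅,ω₁) holds, then no L_{ω1ω}-sentence separates A and B: there is no L_{ω1ω}-sentence φ with A ⊨ φ and B ⊭ φ. -/
def freeVars {L : Vocab} : Fml L → Set ℕ
  | .eq i j => {i, j}
  | .neq i j => {i, j}
  | .rel _ ts => Set.range ts
  | .nrel _ ts => Set.range ts
  | .and φ ψ => freeVars φ ∪ freeVars ψ
  | .or φ ψ => freeVars φ ∪ freeVars ψ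
  | .iand f => ⋃ i, freeVars (f i)
  | .ior f => ⋃ i, freeVars (f i)
  | .ex n φ => freeVars φ \ {n}
  | .all n φ => freeVars φ \ {n}

/-- The finite map `as ↦ bs` is a partial isomorphism. -/
def IsPartialIso {L : Vocab} (A B : Struc L) {n : ℕ}
    (as : Fin n → A.Dom) (bs : Fin n → B.Dom) : Prop :=
  (∀ i j : Fin n, as i = as j ↔ bs i = bs j) ∧
  (∀ (R : L.Rel) (ts : Fin (L.arity R) → Fin n),
    A.rel R (fun k => as (ts k)) ↔ B.rel R (fun k => bs (ts k)))

/-- Player II has a winning strategy in `EFD_γ` from position `(as, bs)`,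
defined by transfinite recursion on `γ`. -/
def WinII {L : Vocab} (A B : Struc L) (γ : Ordinal) {n : ℕ}
    (as : Fin n → A.Dom) (bs : Fin n → B.Dom) : Prop :=
  IsPartialIso A B as bs ∧
  (∀ β : Ordinal, β < γ → ∀ c : A.Dom, ∃ d : B.Dom,
    WinII A B β (Fin.snoc as c) (Fin.snoc bs d)) ∧
  (∀ β : Ordinal, β < γ → ∀ d : B.Dom, ∃ c : A.Dom,
    WinII A B β (Fin.snoc as c) (Fin.snoc bs d))
termination_by γ


/-- Quantifier rank of a formula. -/
noncomputable def qr {L : Vocab} : Fml L → Ordinal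
  | .eq _ _ => 0
  | .neq _ _ => 0
  | .rel _ _ => 0
  | .nrel _ _ => 0
  | .and φ ψ => max (qr φ) (qr ψ)
  | .or φ ψ => max (qr φ) (qr ψ)
  | .iand f => ⨆ i, qr (f i)
  | .ior f => ⨆ i, qr (f i)
  | .ex _ φ => qr φ + 1
  | .all _ φ => qr φ + 1

lemma qr_lt_omega1 {L : Vocab} (φ : Fml L) : qr φ < (Cardinal.aleph 1).ord := by
  induction φ with
  | eq i j => rw [qr]; exact Cardinal.lt_ord.2 (by simpa using Cardinal.aleph_pos 1)
  | neq i j => rw [qr]; exact Cardinal.lt_ord.2 (by simpa using Cardinal.aleph_pos 1)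
  | rel R ts => rw [qr]; exact Cardinal.lt_ord.2 (by simpa using Cardinal.aleph_pos 1)
  | nrel R ts => rw [qr]; exact Cardinal.lt_ord.2 (by simpa using Cardinal.aleph_pos 1)
  | and φ ψ ihφ ihψ => exact max_lt ihφ ihψ
  | or φ ψ ihφ ihψ => exact max_lt ihφ ihψ
  | iand f ih =>
      exact Cardinal.iSup_lt_ord_lift_of_isRegular Cardinal.isRegular_aleph_one
        (by simpa using Cardinal.aleph0_lt_aleph_one) ih
  | ior f ih =>
      exact Cardinal.iSup_lt_ord_lift_of_isRegular Cardinal.isRegular_aleph_one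
        (by simpa using Cardinal.aleph0_lt_aleph_one) ih
  | ex n φ ih =>
      rw [qr, Ordinal.add_one_eq_succ]
      exact (Cardinal.isSuccLimit_ord (Cardinal.aleph0_le_aleph 1)).succ_lt ih
  | all n φ ih =>
      rw [qr, Ordinal.add_one_eq_succ]
      exact (Cardinal.isSuccLimit_ord (Cardinal.aleph0_le_aleph 1)).succ_lt ih

lemma transfer {L : Vocab} (A B : Struc L) (φ : Fml L) :
    ∀ {n : ℕ} (as : Fin n → A.Dom) (bs : Fin n → B.Dom) (γ : Ordinal),
      WinII A B γ as bs → qr φ ≤ γ →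
      ∀ (v : ℕ → A.Dom) (w : ℕ → B.Dom),
        (∀ m ∈ freeVars φ, ∃ i : Fin n, v m = as i ∧ w m = bs i) →
        Sat A v φ → Sat B w φ := by
  induction φ with
  | eq i j =>
      intro n as bs γ hwin _ v w hfree hsat
      rw [WinII] at hwin
      obtain ⟨i', hvi, hwi⟩ := hfree i (by simp [freeVars])
      obtain ⟨j', hvj, hwj⟩ := hfree j (by simp [freeVars])
      have := (hwin.1.1 i' j').1 (by rw [← hvi, ← hvj]; exact hsat)
      rw [Sat, hwi, hwj]; exact this
  | neq i j =>
      intro n as bs γ hwin _ v w hfree hsat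
      rw [WinII] at hwin
      obtain ⟨i', hvi, hwi⟩ := hfree i (by simp [freeVars])
      obtain ⟨j', hvj, hwj⟩ := hfree j (by simp [freeVars])
      rw [Sat, hwi, hwj]
      intro hb
      exact hsat (by rw [hvi, hvj, (hwin.1.1 i' j').2 hb])
  | rel R ts =>
      intro n as bs γ hwin _ v w hfree hsat
      rw [WinII] at hwin
      choose f hf1 hf2 using fun k => hfree (ts k) ⟨k, rfl⟩
      have h1 : A.rel R (fun k => as (f k)) := by
        have : (fun k => as (f k)) = fun k => v (ts k) := funext fun k => (hf1 k).symm
        rw [this]; exact hsat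
      have h2 := (hwin.1.2 R f).1 h1
      rw [Sat]
      have : (fun k => w (ts k)) = fun k => bs (f k) := funext fun k => hf2 k
      rw [this]; exact h2
  | nrel R ts =>
      intro n as bs γ hwin _ v w hfree hsat
      rw [WinII] at hwin
      choose f hf1 hf2 using fun k => hfree (ts k) ⟨k, rfl⟩
      rw [Sat]
      have hw : (fun k => w (ts k)) = fun k => bs (f k) := funext fun k => hf2 k
      rw [hw]
      intro hb
      apply hsat
      have := (hwin.1.2 R f).2 hb
      have hv : (fun k => v (ts k)) = fun k => as (f k) := funext fun k => hf1 k
      rw [hv]; exact this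
  | and φ ψ ihφ ihψ =>
      intro n as bs γ hwin hqr v w hfree hsat
      exact ⟨ihφ as bs γ hwin (le_trans (le_max_left _ _) hqr) v w
          (fun m hm => hfree m (Or.inl hm)) hsat.1,
        ihψ as bs γ hwin (le_trans (le_max_right _ _) hqr) v w
          (fun m hm => hfree m (Or.inr hm)) hsat.2⟩
  | or φ ψ ihφ ihψ =>
      intro n as bs γ hwin hqr v w hfree hsat
      rcases hsat with hs | hs
      · exact Or.inl (ihφ as bs γ hwin (le_trans (le_max_left _ _) hqr) v w
          (fun m hm => hfree m (Or.inl hm)) hs)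
      · exact Or.inr (ihψ as bs γ hwin (le_trans (le_max_right _ _) hqr) v w
          (fun m hm => hfree m (Or.inr hm)) hs)
  | iand f ih =>
      intro n as bs γ hwin hqr v w hfree hsat
      intro i
      exact ih i as bs γ hwin
        (le_trans (le_ciSup (Ordinal.bddAbove_range _) i) hqr) v w
        (fun m hm => hfree m (Set.mem_iUnion.2 ⟨i, hm⟩)) (hsat i)
  | ior f ih =>
      intro n as bs γ hwin hqr v w hfree hsat
      obtain ⟨i, hi⟩ := hsat
      exact ⟨i, ih i as bs γ hwin
        (le_trans (le_ciSup (Ordinal.bddAbove_range _) i) hqr) v w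
        (fun m hm => hfree m (Set.mem_iUnion.2 ⟨i, hm⟩)) hi⟩
  | ex x φ ih =>
      intro n as bs γ hwin hqr v w hfree hsat
      have hlt : qr φ < γ := by
        rw [qr, Ordinal.add_one_eq_succ, Order.succ_le_iff] at hqr; exact hqr
      obtain ⟨a, ha⟩ := hsat
      rw [WinII] at hwin
      obtain ⟨d, hd⟩ := hwin.2.1 (qr φ) hlt a
      refine ⟨d, ih (Fin.snoc as a) (Fin.snoc bs d) (qr φ) hd le_rfl _ _ ?_ ha⟩
      intro m hm
      by_cases hmx : m = x
      · exact ⟨Fin.last n, by subst hmx; simp⟩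
      · obtain ⟨i, h1, h2⟩ := hfree m ⟨hm, hmx⟩
        exact ⟨i.castSucc, by simp [Function.update_of_ne hmx, Fin.snoc_castSucc, h1, h2]⟩
  | all x φ ih =>
      intro n as bs γ hwin hqr v w hfree hsat
      have hlt : qr φ < γ := by
        rw [qr, Ordinal.add_one_eq_succ, Order.succ_le_iff] at hqr; exact hqr
      intro d
      rw [WinII] at hwin
      obtain ⟨c, hc⟩ := hwin.2.2 (qr φ) hlt d
      refine ih (Fin.snoc as c) (Fin.snoc bs d) (qr φ) hc le_rfl _ _ ?_ (hsat c)
      intro m hm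
      by_cases hmx : m = x
      · exact ⟨Fin.last n, by subst hmx; simp⟩
      · obtain ⟨i, h1, h2⟩ := hfree m ⟨hm, hmx⟩
        exact ⟨i.castSucc, by simp [Function.update_of_ne hmx, Fin.snoc_castSucc, h1, h2]⟩

/-- If Player II has a winning strategy in `EFD_{ω₁}(A, B)`, then no
`L_{ω₁ω}`-sentence separates `A` and `B`. -/
theorem no_Lomega1omega_separation {L : Vocab} (A B : Struc L)
    (h : WinII A B (Cardinal.aleph 1).ord
      (Fin.elim0 : Fin 0 → A.Dom) (Fin.elim0 : Fin 0 → B.Dom)) :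
    ¬ ∃ φ : Fml L, freeVars φ = ∅ ∧
      (∀ v : ℕ → A.Dom, Sat A v φ) ∧ ¬ (∀ v : ℕ → B.Dom, Sat B v φ) := by
  rintro ⟨φ, hfv, hA, hB⟩
  apply hB
  intro w
  have v : ℕ → A.Dom := fun _ => Classical.choice A.nonempty
  exact transfer A B φ Fin.elim0 Fin.elim0 _ h (qr_lt_omega1 φ).le v w
    (fun m hm => by rw [hfv] at hm; exact absurd hm (Set.notMem_empty m)) (hA v)
end

section
/- (Theorem 4 of the paper, Karp's theorem) Let L be a relational vocabulary, A and B be L-structures, and α be an ordinal. Then the following are equivalent: (1) A ≡^α_{∞ω} B, i.e. A and B satisfy exactly the same L_{∞ω}-sentences of quantifier rank at most α; (2) Player II has a winning strategy in EFD_α(A,B), i.e. WinII(∅,∅,α) holds. -/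
/-- `L_{∞ω}`-formulas in negation normal form, with conjunctions and
disjunctions over arbitrary index sets. -/
inductive FmlInf (L : Vocab) : Type 1
  | eq : ℕ → ℕ → FmlInf L
  | neq : ℕ → ℕ → FmlInf L
  | rel : (R : L.Rel) → (Fin (L.arity R) → ℕ) → FmlInf L
  | nrel : (R : L.Rel) → (Fin (L.arity R) → ℕ) → FmlInf L
  | iand : (I : Type) → (I → FmlInf L) → FmlInf L
  | ior : (I : Type) → (I → FmlInf L) → FmlInf L
  | ex : ℕ → FmlInf L → FmlInf L
  | all : ℕ → FmlInf L → FmlInf L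

def SatInf {L : Vocab} (A : Struc L) (v : ℕ → A.Dom) : FmlInf L → Prop
  | .eq i j => v i = v j
  | .neq i j => v i ≠ v j
  | .rel R ts => A.rel R (fun k => v (ts k))
  | .nrel R ts => ¬ A.rel R (fun k => v (ts k))
  | .iand I f => ∀ i : I, SatInf A v (f i)
  | .ior I f => ∃ i : I, SatInf A v (f i)
  | .ex n φ => ∃ a : A.Dom, SatInf A (Function.update v n a) φ
  | .all n φ => ∀ a : A.Dom, SatInf A (Function.update v n a) φ

noncomputable def qrInf {L : Vocab} : FmlInf L → Ordinal
  | .eq _ _ => 0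
  | .neq _ _ => 0
  | .rel _ _ => 0
  | .nrel _ _ => 0
  | .iand I f => ⨆ i : I, qrInf (f i)
  | .ior I f => ⨆ i : I, qrInf (f i)
  | .ex _ φ => qrInf φ + 1
  | .all _ φ => qrInf φ + 1

def freeVarsInf {L : Vocab} : FmlInf L → Set ℕ
  | .eq i j => {i, j}
  | .neq i j => {i, j}
  | .rel _ ts => Set.range ts
  | .nrel _ ts => Set.range ts
  | .iand _ f => ⋃ i, freeVarsInf (f i)
  | .ior _ f => ⋃ i, freeVarsInf (f i)
  | .ex n φ => freeVarsInf φ \ {n}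
  | .all n φ => freeVarsInf φ \ {n}

/-- `A ≡^α_{∞ω} B`: `A` and `B` satisfy the same `L_{∞ω}`-sentences of
quantifier rank at most `α`. -/
def EquivInf {L : Vocab} (A B : Struc L) (α : Ordinal) : Prop :=
  ∀ φ : FmlInf L, freeVarsInf φ = ∅ → qrInf φ ≤ α →
    ((∀ v : ℕ → A.Dom, SatInf A v φ) ↔ (∀ v : ℕ → B.Dom, SatInf B v φ))

/-!
If Player II wins `EFD_γ` from `(ā, b̄)`, then `ā` and `b̄` satisfy the same formulas of rank at
most `γ`: induct on the formula, answering each quantifier with one round of the game.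
Conversely, the rank-`β` Hintikka formula of `ā` in `A` holds of `b̄` in `B` exactly when Player II
wins `EFD_β` from `(ā, b̄)`. It is a sentence of rank `β` true in `A`, so `A ≡^α_{∞ω} B` gives
Player II a win for every `β ≤ α`. These formulas only exist for ordinals `β` of the universe of
the index types; for larger `α` one uses that the domains are small: a win in `EFD_β` for all
small `β` is a win in every `EFD_γ`.
-/

universe u

variable {L : Vocab}

section Game

variable {A B : Struc L} {n : ℕ} {as : Fin n → A.Dom} {bs : Fin n → B.Dom} {γ : Ordinal}

theorem WinII.isPartialIso (h : WinII A B γ as bs) : IsPartialIso A B as bs := by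
  rw [WinII] at h
  exact h.1

theorem WinII.forth (h : WinII A B γ as bs) {β : Ordinal} (hβ : β < γ) (c : A.Dom) :
    ∃ d, WinII A B β (Fin.snoc as c) (Fin.snoc bs d) := by
  rw [WinII] at h
  exact h.2.1 β hβ c

theorem WinII.back (h : WinII A B γ as bs) {β : Ordinal} (hβ : β < γ) (d : B.Dom) :
    ∃ c, WinII A B β (Fin.snoc as c) (Fin.snoc bs d) := by
  rw [WinII] at h
  exact h.2.2 β hβ d

theorem WinII.mono (h : WinII A B γ as bs) {γ' : Ordinal} (hγ : γ' ≤ γ) :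
    WinII A B γ' as bs := by
  rw [WinII]
  exact ⟨h.isPartialIso, fun β hβ => h.forth (hβ.trans_le hγ),
    fun β hβ => h.back (hβ.trans_le hγ)⟩

theorem IsPartialIso.symm (h : IsPartialIso A B as bs) : IsPartialIso B A bs as :=
  ⟨fun i j => (h.1 i j).symm, fun R ts => (h.2 R ts).symm⟩

theorem WinII.symm (h : WinII A B γ as bs) : WinII B A γ bs as := by
  induction γ using WellFoundedLT.induction generalizing n with
  | _ γ ih =>
    rw [WinII]
    refine ⟨h.isPartialIso.symm, fun β hβ d => ?_, fun β hβ c => ?_⟩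
    · obtain ⟨c, hc⟩ := h.back hβ d
      exact ⟨c, ih β hβ hc⟩
    · obtain ⟨d, hd⟩ := h.forth hβ c
      exact ⟨d, ih β hβ hd⟩

theorem winII_refl (A : Struc L) (γ : Ordinal) (as : Fin n → A.Dom) : WinII A A γ as as := by
  induction γ using WellFoundedLT.induction generalizing n with
  | _ γ ih =>
    rw [WinII]
    exact ⟨⟨fun _ _ => Iff.rfl, fun _ _ => Iff.rfl⟩, fun β hβ c => ⟨c, ih β hβ _⟩,
      fun β hβ d => ⟨d, ih β hβ _⟩⟩

end Game

section Transfer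

def AgreeOn {D E : Type} {n : ℕ} (S : Set ℕ) (v : ℕ → D) (w : ℕ → E) (as : Fin n → D)
    (bs : Fin n → E) : Prop :=
  ∀ m ∈ S, ∃ i, v m = as i ∧ w m = bs i

variable {D E : Type} {n : ℕ} {S T : Set ℕ} {v : ℕ → D} {w : ℕ → E} {as : Fin n → D}
  {bs : Fin n → E}

theorem AgreeOn.mono (h : AgreeOn S v w as bs) (hT : T ⊆ S) : AgreeOn T v w as bs :=
  fun m hm => h m (hT hm)

theorem AgreeOn.symm (h : AgreeOn S v w as bs) : AgreeOn S w v bs as :=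
  fun m hm => (h m hm).imp fun _ hi => hi.symm

theorem AgreeOn.update_snoc {x : ℕ} (h : AgreeOn (S \ {x}) v w as bs) (a : D) (b : E) :
    AgreeOn S (Function.update v x a) (Function.update w x b) (Fin.snoc as a)
      (Fin.snoc bs b) := by
  intro m hm
  by_cases hmx : m = x
  · subst hmx
    exact ⟨Fin.last n, by simp⟩
  · obtain ⟨i, hvi, hwi⟩ := h m ⟨hm, hmx⟩
    exact ⟨i.castSucc, by simp [Function.update_of_ne hmx, hvi, hwi]⟩

variable {A B : Struc L} {v : ℕ → A.Dom} {w : ℕ → B.Dom} {as : Fin n → A.Dom}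
  {bs : Fin n → B.Dom}

theorem IsPartialIso.eq_iff_of_agreeOn (h : IsPartialIso A B as bs) (hS : AgreeOn S v w as bs)
    {i j : ℕ} (hi : i ∈ S) (hj : j ∈ S) : v i = v j ↔ w i = w j := by
  obtain ⟨i', hvi, hwi⟩ := hS i hi
  obtain ⟨j', hvj, hwj⟩ := hS j hj
  rw [hvi, hvj, hwi, hwj]
  exact h.1 i' j'

theorem IsPartialIso.rel_iff_of_agreeOn (h : IsPartialIso A B as bs) (hS : AgreeOn S v w as bs)
    (R : L.Rel) {ts : Fin (L.arity R) → ℕ} (hts : Set.range ts ⊆ S) :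
    A.rel R (fun k => v (ts k)) ↔ B.rel R (fun k => w (ts k)) := by
  choose g hg using fun k => hS (ts k) (hts (Set.mem_range_self k))
  have hv : (fun k => v (ts k)) = fun k => as (g k) := funext fun k => (hg k).1
  have hw : (fun k => w (ts k)) = fun k => bs (g k) := funext fun k => (hg k).2
  rw [hv, hw]
  exact h.2 R g

theorem satInf_of_winII (φ : FmlInf L) {A B : Struc L} {γ : Ordinal.{u}} {n : ℕ}
    {as : Fin n → A.Dom} {bs : Fin n → B.Dom} (hwin : WinII A B γ as bs) (hγ : qrInf φ ≤ γ)
    {v : ℕ → A.Dom} {w : ℕ → B.Dom} (hfree : AgreeOn (freeVarsInf φ) v w as bs) :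
    SatInf A v φ → SatInf B w φ := by
  induction φ generalizing A B γ n with
  | eq i j =>
    exact (hwin.isPartialIso.eq_iff_of_agreeOn hfree (by simp [freeVarsInf])
      (by simp [freeVarsInf])).mp
  | neq i j =>
    exact mt (hwin.isPartialIso.eq_iff_of_agreeOn hfree (by simp [freeVarsInf])
      (by simp [freeVarsInf])).mpr
  | rel R ts => exact (hwin.isPartialIso.rel_iff_of_agreeOn hfree R subset_rfl).mp
  | nrel R ts => exact mt (hwin.isPartialIso.rel_iff_of_agreeOn hfree R subset_rfl).mpr
  | iand I f ih =>
    intro h i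
    exact ih i hwin (hγ.trans' (Ordinal.le_iSup.{u} _ i))
      (hfree.mono (Set.subset_iUnion (fun i => freeVarsInf (f i)) i)) (h i)
  | ior I f ih =>
    rintro ⟨i, h⟩
    exact ⟨i, ih i hwin (hγ.trans' (Ordinal.le_iSup.{u} _ i))
      (hfree.mono (Set.subset_iUnion (fun i => freeVarsInf (f i)) i)) h⟩
  | ex x ψ ih =>
    have hlt : qrInf ψ < γ := Order.add_one_le_iff.mp hγ
    rintro ⟨a, ha⟩
    obtain ⟨b, hb⟩ := hwin.forth hlt a
    exact ⟨b, ih hb le_rfl (hfree.update_snoc a b) ha⟩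
  | all x ψ ih =>
    have hlt : qrInf ψ < γ := Order.add_one_le_iff.mp hγ
    intro h b
    obtain ⟨a, ha⟩ := hwin.back hlt b
    exact ih ha le_rfl (hfree.update_snoc a b) (h a)

theorem satInf_iff_of_winII {φ : FmlInf L} {γ : Ordinal} (hwin : WinII A B γ as bs)
    (hγ : qrInf φ ≤ γ) (hfree : AgreeOn (freeVarsInf φ) v w as bs) :
    SatInf A v φ ↔ SatInf B w φ :=
  ⟨satInf_of_winII φ hwin hγ hfree, satInf_of_winII φ hwin.symm hγ hfree.symm⟩

end Transfer

section Hintikka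

open Ordinal

theorem Ordinal.forall_lt_lift_iff {β : Ordinal.{0}} {P : Ordinal.{u} → Prop} :
    (∀ β' < lift.{u} β, P β') ↔ ∀ i : β.ToType, P (lift.{u} i) := by
  refine ⟨fun h i => h _ (lift_lt.mpr (ToType.toOrd i).2), fun h β' hβ' => ?_⟩
  obtain ⟨δ, hδ, rfl⟩ := lt_lift_iff.mp hβ'
  simpa using h (ToType.mk ⟨δ, hδ⟩)

variable {n : ℕ}

theorem update_eq_snoc {D : Type} {bs : Fin n → D} {w : ℕ → D} (hw : ∀ i : Fin n, w i = bs i)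
    (d : D) (i : Fin (n + 1)) : Function.update w n d i = (Fin.snoc bs d : Fin (n + 1) → D) i := by
  induction i using Fin.lastCases with
  | last => simp
  | cast j => simp [Function.update_of_ne j.isLt.ne, hw]

open scoped Classical in
noncomputable def FmlInf.diagram (A : Struc L) (as : Fin n → A.Dom) : FmlInf L :=
  .iand ((Fin n × Fin n) ⊕ (Σ R : L.Rel, Fin (L.arity R) → Fin n)) fun
    | .inl (i, j) => if as i = as j then .eq i j else .neq i j
    | .inr ⟨R, ts⟩ =>
        if A.rel R (fun k => as (ts k)) then .rel R (fun k => ts k) else .nrel R (fun k => ts k)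

-- The three families of conjuncts mirror the three clauses in the definition of `WinII`.
noncomputable def FmlInf.hintikka (A : Struc L) (β : Ordinal.{0}) {n : ℕ} (as : Fin n → A.Dom) :
    FmlInf L :=
  .iand (Unit ⊕ (β.ToType × A.Dom) ⊕ β.ToType) fun
    | .inl _ => diagram A as
    | .inr (.inl (i, c)) => .ex n (hintikka A (ToType.toOrd i) (Fin.snoc as c))
    | .inr (.inr i) => .all n (.ior A.Dom fun c => hintikka A (ToType.toOrd i) (Fin.snoc as c))
termination_by β
decreasing_by all_goals exact (ToType.toOrd i).2

theorem FmlInf.qrInf_diagram (A : Struc L) (as : Fin n → A.Dom) :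
    qrInf.{u} (diagram A as) = 0 := by
  rw [diagram, qrInf]
  refine le_antisymm (Ordinal.iSup_le ?_) zero_le
  rintro (⟨i, j⟩ | ⟨R, ts⟩) <;> dsimp only <;> split <;> rw [qrInf]

theorem FmlInf.freeVarsInf_diagram_subset (A : Struc L) (as : Fin n → A.Dom) :
    freeVarsInf (diagram A as) ⊆ Set.Iio n := by
  rw [diagram, freeVarsInf]
  refine Set.iUnion_subset ?_
  rintro (⟨i, j⟩ | ⟨R, ts⟩) <;> dsimp only <;> split <;>
    simp [freeVarsInf, Set.insert_subset_iff, Set.range_subset_iff]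

theorem FmlInf.qrInf_hintikka_le (A : Struc L) (β : Ordinal.{0}) {n : ℕ} (as : Fin n → A.Dom) :
    qrInf.{u} (hintikka A β as) ≤ lift.{u} β := by
  rw [hintikka, qrInf]
  refine Ordinal.iSup_le ?_
  rintro (_ | ⟨i, c⟩ | i) <;> dsimp only
  · rw [qrInf_diagram]
    exact zero_le
  · rw [qrInf, Order.add_one_le_iff]
    exact (qrInf_hintikka_le A _ _).trans_lt (lift_lt.mpr (ToType.toOrd i).2)
  · rw [qrInf, qrInf, Order.add_one_le_iff]
    exact (Ordinal.iSup_le fun c => qrInf_hintikka_le A _ _).trans_lt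
      (lift_lt.mpr (ToType.toOrd i).2)
termination_by β
decreasing_by all_goals exact (ToType.toOrd i).2

theorem FmlInf.freeVarsInf_hintikka_subset (A : Struc L) (β : Ordinal.{0}) {n : ℕ}
    (as : Fin n → A.Dom) : freeVarsInf (hintikka A β as) ⊆ Set.Iio n := by
  rw [hintikka, freeVarsInf]
  refine Set.iUnion_subset ?_
  rintro (_ | ⟨i, c⟩ | i) <;> dsimp only
  · exact freeVarsInf_diagram_subset A as
  · rintro m ⟨hm, hmn⟩
    have := freeVarsInf_hintikka_subset A _ _ hm
    exact (Nat.lt_succ_iff.mp this).lt_of_ne hmn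
  · rintro m ⟨hm, hmn⟩
    simp only [freeVarsInf, Set.mem_iUnion] at hm
    obtain ⟨c, hm⟩ := hm
    have := freeVarsInf_hintikka_subset A _ _ hm
    exact (Nat.lt_succ_iff.mp this).lt_of_ne hmn
termination_by β
decreasing_by all_goals exact (ToType.toOrd i).2

variable {A B : Struc L} {as : Fin n → A.Dom} {bs : Fin n → B.Dom} {w : ℕ → B.Dom}

theorem FmlInf.satInf_diagram_iff (hw : ∀ i : Fin n, w i = bs i) :
    SatInf B w (diagram A as) ↔ IsPartialIso A B as bs := by
  simp only [diagram, SatInf, Sum.forall, Prod.forall, Sigma.forall, IsPartialIso]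
  refine and_congr (forall₂_congr fun i j => ?_) (forall₂_congr fun R ts => ?_) <;>
    split_ifs with h <;> simp [SatInf, hw, h]

theorem FmlInf.satInf_hintikka_iff (β : Ordinal.{0}) (hw : ∀ i : Fin n, w i = bs i) :
    SatInf B w (hintikka A β as) ↔ WinII A B (lift.{u} β) as bs := by
  induction β using WellFoundedLT.induction generalizing n w with
  | _ β ih =>
    have ih' (i : β.ToType) (c : A.Dom) (d : B.Dom) :
        SatInf B (Function.update w n d) (hintikka A (ToType.toOrd i) (Fin.snoc as c)) ↔
          WinII A B (lift.{u} (ToType.toOrd i)) (Fin.snoc as c) (Fin.snoc bs d) :=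
      ih _ (ToType.toOrd i).2 (update_eq_snoc hw d)
    rw [hintikka, WinII]
    simp only [SatInf, Sum.forall, Prod.forall, ih', satInf_diagram_iff hw, forall_const,
      Ordinal.forall_lt_lift_iff]

end Hintikka

section SmallOrdinals

open Ordinal

variable {A B : Struc L} {n : ℕ} {as : Fin n → A.Dom} {bs : Fin n → B.Dom}

theorem exists_forall_winII_lift_snoc (h : ∀ δ : Ordinal.{0}, WinII A B (lift.{u} δ) as bs)
    (c : A.Dom) :
    ∃ d, ∀ δ : Ordinal.{0}, WinII A B (lift.{u} δ) (Fin.snoc as c) (Fin.snoc bs d) := by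
  by_contra! hc
  choose δ hδ using hc
  -- `B.Dom : Type`, so the ranks `δ d` at which the answers `d` lose have a small supremum.
  obtain ⟨d, hd⟩ := (h ((⨆ d, δ d) + 1)).forth (lift_lt.mpr (Order.lt_add_one_iff.mpr le_rfl)) c
  exact hδ d (hd.mono (lift_le.mpr (Ordinal.le_iSup δ d)))

theorem winII_of_forall_winII_lift (h : ∀ δ : Ordinal.{0}, WinII A B (lift.{u} δ) as bs)
    (γ : Ordinal.{u}) : WinII A B γ as bs := by
  induction γ using WellFoundedLT.induction generalizing n with
  | _ γ ih =>
    rw [WinII]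
    refine ⟨(h 0).isPartialIso, fun β hβ c => ?_, fun β hβ d => ?_⟩
    · obtain ⟨d, hd⟩ := exists_forall_winII_lift_snoc h c
      exact ⟨d, ih β hβ hd⟩
    · obtain ⟨c, hc⟩ := exists_forall_winII_lift_snoc (fun δ => (h δ).symm) d
      exact ⟨c, ih β hβ fun δ => (hc δ).symm⟩

theorem winII_of_forall_lift_le {α : Ordinal.{u}}
    (h : ∀ δ : Ordinal.{0}, lift.{u} δ ≤ α → WinII A B (lift.{u} δ) as bs) : WinII A B α as bs := by
  by_cases hα : α ∈ Set.range lift.{u, 0}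
  · obtain ⟨δ, rfl⟩ := hα
    exact h δ le_rfl
  · refine winII_of_forall_winII_lift (fun δ => h δ ?_) α
    by_contra! hlt
    exact hα (mem_range_lift_of_le hlt.le)

end SmallOrdinals

/-- Karp's theorem. -/
theorem karp {L : Vocab} (A B : Struc L) (α : Ordinal) :
    EquivInf A B α ↔
      WinII A B α (Fin.elim0 : Fin 0 → A.Dom) (Fin.elim0 : Fin 0 → B.Dom) := by
  obtain ⟨a⟩ := A.nonempty
  obtain ⟨b⟩ := B.nonempty
  constructor
  · intro h
    refine winII_of_forall_lift_le fun δ hδ => ?_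
    let φ := FmlInf.hintikka A δ (Fin.elim0 : Fin 0 → A.Dom)
    have hφ : freeVarsInf φ = ∅ :=
      Set.subset_empty_iff.mp (by simpa using FmlInf.freeVarsInf_hintikka_subset A δ Fin.elim0)
    have hA (v : ℕ → A.Dom) : SatInf A v φ :=
      (FmlInf.satInf_hintikka_iff.{0} δ finZeroElim).mpr (winII_refl A _ _)
    exact (FmlInf.satInf_hintikka_iff δ finZeroElim).mp
      ((h φ hφ ((FmlInf.qrInf_hintikka_le A δ _).trans hδ)).mp hA fun _ => b)
  · intro hwin φ hφ hqr
    have hiff (v : ℕ → A.Dom) (w : ℕ → B.Dom) : SatInf A v φ ↔ SatInf B w φ :=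
      satInf_iff_of_winII hwin hqr (by simp [AgreeOn, hφ])
    exact ⟨fun hA w => (hiff (fun _ => a) w).mp (hA _),
      fun hB v => (hiff v fun _ => b).mpr (hB _)⟩
end
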